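/- arXiv:2005.10815 — 2 statements merged into one kernel-verified Lean document; each statement's English description precedes it below -/
import Mathlib

section
/- If N : [0,∞) → [0,∞) and R : [0,∞) → [0,∞) are differentiable, R is nonincreasing, and (d/dt)√(N(t)) ≤ |dR/dt|^{1/2} for all t > 0, then lim_{t→∞} N(t)/t = 0. -/
/-!
By AM–GM, `√|R'| ≤ ε / 2 + |R'| / (2ε)`, so integrating the dissipation inequality gives
`√N t ≤ √N s + ε (t - s) / 2 + (R s - R t) / (2ε)`. Since `R` converges, taking `s` large and
`ε ≍ 1 / √t` yields `√N t = o(√t)`. The integration is carried out for `√(N + δ²)`, which is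
differentiable even where `N` vanishes, and then `δ → 0`.
-/

open Real Filter Set

lemma Real.sqrt_le_half_add_div {ε : ℝ} (hε : 0 < ε) {x : ℝ} (hx : 0 ≤ x) :
    √x ≤ ε / 2 + x / (2 * ε) := by
  rw [show ε / 2 + x / (2 * ε) = (ε ^ 2 + x) / (2 * ε) by field_simp,
    le_div_iff₀ (by positivity)]
  nlinarith [Real.sq_sqrt hx, sq_nonneg (√x - ε)]

/-- At zeros of `N` the junk value `deriv √N = 0` is harmless: `N` has a minimum there. -/
lemma deriv_div_two_sqrt_add_sq_le {N : ℝ → ℝ} {x : ℝ} (hN0 : ∀ u, 0 ≤ N u)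
    (hN : DifferentiableAt ℝ N x) (δ : ℝ) :
    deriv N x / (2 * √(N x + δ ^ 2)) ≤ max 0 (deriv (fun u => √(N u)) x) := by
  rcases (hN0 x).eq_or_lt with hNx | hNx
  · have hmin : IsLocalMin N x := Eventually.of_forall fun y => hNx ▸ hN0 y
    simp [hmin.deriv_eq_zero]
  · rw [(hN.hasDerivAt.sqrt hNx.ne').deriv]
    rcases le_or_gt (deriv N x) 0 with hdN | hdN
    · exact (div_nonpos_of_nonpos_of_nonneg hdN (by positivity)).trans (le_max_left _ _)
    · refine le_max_of_le_right (div_le_div_of_nonneg_left hdN.le (by positivity) ?_)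
      gcongr
      linarith [sq_nonneg δ]

lemma sqrt_sub_sqrt_le_of_deriv_le {N B : ℝ → ℝ} {s t : ℝ} (hN0 : ∀ u, 0 ≤ N u)
    (hN : Differentiable ℝ N) (hB : Differentiable ℝ B)
    (hNB : ∀ x ∈ Ioo s t, max 0 (deriv (fun u => √(N u)) x) ≤ deriv B x) (hst : s ≤ t) :
    √(N t) - √(N s) ≤ B t - B s := by
  refine le_of_forall_pos_le_add fun δ hδ => ?_
  have hpos : ∀ u, 0 < N u + δ ^ 2 := fun u => by linarith [hN0 u, pow_pos hδ 2]
  have hF : ∀ x, HasDerivAt (fun u => √(N u + δ ^ 2) - B u)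
      (deriv N x / (2 * √(N x + δ ^ 2)) - deriv B x) x := fun x =>
    (((hN x).hasDerivAt.add_const _).sqrt (hpos x).ne').sub (hB x).hasDerivAt
  have hanti : AntitoneOn (fun u => √(N u + δ ^ 2) - B u) (Icc s t) := by
    refine antitoneOn_of_deriv_nonpos (convex_Icc s t)
      (fun x _ => (hF x).continuousAt.continuousWithinAt)
      (fun x _ => (hF x).differentiableAt.differentiableWithinAt) fun x hx => ?_
    rw [interior_Icc] at hx
    rw [(hF x).deriv, sub_nonpos]
    exact (deriv_div_two_sqrt_add_sq_le hN0 (hN x) δ).trans (hNB x hx)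
  have hts := hanti ⟨le_rfl, hst⟩ ⟨hst, le_rfl⟩ hst
  have ht : √(N t) ≤ √(N t + δ ^ 2) := Real.sqrt_le_sqrt (by linarith [sq_nonneg δ])
  have hs : √(N s + δ ^ 2) ≤ √(N s) + δ := by
    rw [Real.sqrt_le_left (by positivity)]
    nlinarith [Real.sq_sqrt (hN0 s), Real.sqrt_nonneg (N s)]
  simp only at hts
  linarith

lemma sqrt_le_sqrt_add_of_deriv_sqrt_le {N R : ℝ → ℝ} {s t : ℝ} (hN0 : ∀ u, 0 ≤ N u)
    (hN : Differentiable ℝ N) (hR : Differentiable ℝ R) (hRmono : Antitone R)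
    (hdissip : ∀ x ∈ Ioo s t, deriv (fun u => √(N u)) x ≤ √|deriv R x|)
    {ε : ℝ} (hε : 0 < ε) (hst : s ≤ t) :
    √(N t) ≤ √(N s) + ε * (t - s) / 2 + (R s - R t) / (2 * ε) := by
  have hB : ∀ x, HasDerivAt (fun u => ε * u / 2 - R u / (2 * ε))
      (ε / 2 + |deriv R x| / (2 * ε)) x := fun x => by
    rw [abs_of_nonpos hRmono.deriv_nonpos, neg_div, ← sub_eq_add_neg]
    exact (((hasDerivAt_id x).const_mul ε).div_const 2).sub
      ((hR x).hasDerivAt.div_const _) |>.congr_deriv (by simp)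
  have := sqrt_sub_sqrt_le_of_deriv_le hN0 hN (fun x => (hB x).differentiableAt)
    (fun x hx => ?_) hst
  · linarith [show ε * t / 2 - R t / (2 * ε) - (ε * s / 2 - R s / (2 * ε)) =
      ε * (t - s) / 2 + (R s - R t) / (2 * ε) by ring]
  rw [(hB x).deriv]
  exact max_le (by positivity)
    ((hdissip x hx).trans (Real.sqrt_le_half_add_div hε (abs_nonneg _)))

/-- The asymptotic half of the argument: take `ε ≍ η / √t` with `s` so large that `R s` is
within `η² / 4` of its limit. -/
lemma tendsto_div_sqrt_zero_of_le_add {f R : ℝ → ℝ} {L : ℝ} (hRL : Tendsto R atTop (nhds L))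
    (hRmono : Antitone R)
    (hf : ∀ s t ε, 0 < s → s ≤ t → 0 < ε → f t ≤ f s + ε * (t - s) / 2 + (R s - R t) / (2 * ε))
    (hf0 : ∀ t, 0 ≤ f t) :
    Tendsto (fun t => f t / √t) atTop (nhds 0) := by
  refine tendsto_order.2 ⟨fun a ha => Eventually.of_forall fun t => ha.trans_le
    (div_nonneg (hf0 t) (Real.sqrt_nonneg t)), fun η hη => ?_⟩
  obtain ⟨s, hRs, hs⟩ := ((tendsto_order.1 hRL).2 _ (lt_add_of_pos_right L
    (show 0 < η ^ 2 / 4 by positivity))).and (eventually_gt_atTop 0) |>.exists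
  filter_upwards [eventually_ge_atTop s, Real.tendsto_sqrt_atTop.eventually_gt_atTop
    (2 * f s / η)] with t hst hft
  have hτ : 0 < √t := (div_nonneg (by linarith [hf0 s]) hη.le).trans_lt hft
  have hRt : ∀ u, L ≤ R u := fun u => hRmono.le_of_tendsto hRL u
  have key := hf s t (η / (2 * √t)) hs hst (by positivity)
  rw [div_lt_iff₀ hτ]
  have h1 : η / (2 * √t) * (t - s) / 2 ≤ η * √t / 4 := by
    calc η / (2 * √t) * (t - s) / 2 ≤ η / (2 * √t) * t / 2 := by gcongr; linarith
      _ = η * √t / 4 := by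
        field_simp
        rw [Real.sq_sqrt (hs.le.trans hst)]
        ring
  have h2 : (R s - R t) / (2 * (η / (2 * √t))) < η * √t / 4 := by
    rw [show 2 * (η / (2 * √t)) = η / √t by field_simp, div_div_eq_mul_div, div_lt_iff₀ hη]
    nlinarith [hRt t]
  have h3 : f s < η * √t / 2 := by
    rw [div_lt_iff₀ hη] at hft
    linarith
  linarith

/-- Sublinear growth of second moments: if `R` is a nonincreasing nonnegative
risk and `(d/dt)√(N t) ≤ |R'(t)|^{1/2}`, then `N t / t → 0`. -/
theorem stmt0
    (N R : ℝ → ℝ)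
    (hN0 : ∀ t, 0 ≤ N t) (hR0 : ∀ t, 0 ≤ R t)
    (hNdiff : Differentiable ℝ N) (hRdiff : Differentiable ℝ R)
    (hRmono : Antitone R)
    (hdissip : ∀ t > (0 : ℝ),
      deriv (fun s => Real.sqrt (N s)) t ≤ Real.sqrt |deriv R t|) :
    Tendsto (fun t => N t / t) atTop (nhds 0) := by
  have hRL : Tendsto R atTop (nhds (⨅ u, R u)) :=
    tendsto_atTop_ciInf hRmono ⟨0, by rintro _ ⟨u, rfl⟩; exact hR0 u⟩
  have hsqrt := tendsto_div_sqrt_zero_of_le_add hRL hRmono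
    (fun s t ε hs hst hε => sqrt_le_sqrt_add_of_deriv_sqrt_le hN0 hNdiff hRdiff hRmono
      (fun x hx => hdissip x (hs.trans hx.1)) hε hst) (fun t => Real.sqrt_nonneg (N t))
  refine (by simpa using hsqrt.mul hsqrt : Tendsto _ _ _).congr' ?_
  filter_upwards [eventually_gt_atTop 0] with t ht
  rw [div_mul_div_comm, Real.mul_self_sqrt (hN0 t), Real.mul_self_sqrt ht.le]
end

section
/- Let E : [0,∞) → [0,∞) be nonincreasing with limsup_{s→∞} s^{γ} E(s) = ∞ for all γ > γ₀. If A : [0,∞) → [0,∞) satisfies A(t) ≤ C(1 + t^{β}) for some β ∈ (0,1), then limsup_{t→∞} t^{γ} E(A(t)) = ∞ for every γ > β·γ₀. -/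
open Real Filter

/-! For a norm level `s ≥ 2C`, the time `t = (s / 2C) ^ (1/β)` satisfies `A t ≤ s`, hence
`E (A t) ≥ E s`, while `t ^ γ = (s / 2C) ^ (γ/β)`. Since `γ/β > γ₀`, the unbounded values of
`s ^ (γ/β) * E s` reappear, up to the factor `(2C) ^ (-γ/β)`, among the values of
`t ^ γ * E (A t)` at times `t → ∞`. -/

theorem Filter.Tendsto.forall_frequently_le_of_le_comp {α β : Type*} {l₁ : Filter α}
    {l₂ : Filter β} {f : α → ℝ} {g : β → ℝ} {φ : α → β} {c : ℝ} (hc : 0 < c)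
    (hφ : Tendsto φ l₁ l₂) (hfg : ∀ᶠ s in l₁, c * f s ≤ g (φ s))
    (hf : ∀ M, ∃ᶠ s in l₁, M ≤ f s) (M : ℝ) : ∃ᶠ t in l₂, M ≤ g t := by
  refine hφ.frequently (((hf (M / c)).and_eventually hfg).mono fun s ⟨hMf, hfg⟩ => ?_)
  calc M = c * (M / c) := by field_simp
    _ ≤ c * f s := by gcongr
    _ ≤ g (φ s) := hfg

theorem stmt12_general
    (A E : ℝ → ℝ) (γ₀ β C : ℝ) (hβ : 0 < β)
    (hC : 0 < C)
    (hA : ∀ t : ℝ, 0 ≤ t → A t ≤ C * (1 + t ^ β))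
    (hEmono : Antitone E)
    (hE : ∀ γ : ℝ, γ₀ < γ → ∀ M : ℝ, ∃ᶠ s in atTop, M ≤ s ^ γ * E s) :
    ∀ γ : ℝ, β * γ₀ < γ → ∀ M : ℝ, ∃ᶠ t in atTop, M ≤ t ^ γ * E (A t) := by
  intro γ hγ
  have h2C : 0 < 2 * C := by positivity
  set φ : ℝ → ℝ := fun s => (s / (2 * C)) ^ β⁻¹
  have hφ : Tendsto φ atTop atTop :=
    (tendsto_rpow_atTop (inv_pos.2 hβ)).comp (tendsto_id.atTop_div_const h2C)
  refine hφ.forall_frequently_le_of_le_comp (inv_pos.2 (rpow_pos_of_pos h2C (γ / β))) ?_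
    (hE _ ((lt_div_iff₀ hβ).2 (by linarith)))
  filter_upwards [eventually_ge_atTop (2 * C)] with s hs
  have hx : 0 ≤ s / (2 * C) := div_nonneg (h2C.le.trans hs) h2C.le
  have hAφ : A (φ s) ≤ s := by
    have h := hA (φ s) (rpow_nonneg hx _)
    rw [rpow_inv_rpow hx hβ.ne'] at h
    calc A (φ s) ≤ C * (1 + s / (2 * C)) := h
      _ = C + s / 2 := by field_simp
      _ ≤ s := by linarith
  calc ((2 * C) ^ (γ / β))⁻¹ * (s ^ (γ / β) * E s) = φ s ^ γ * E s := by
        rw [← rpow_mul hx, div_rpow (h2C.le.trans hs) h2C.le, inv_mul_eq_div]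
        ring_nf
    _ ≤ φ s ^ γ * E (A (φ s)) := by gcongr; exact hEmono hAφ

/-- Quantified transfer: if the norm bound grows like `t^β` with `β ∈ (0,1)`,
the slow-approximation exponent `γ₀` transfers to the exponent `β·γ₀` in time. -/
theorem stmt12
    (A E : ℝ → ℝ) (γ₀ β C : ℝ) (hγ₀ : 0 < γ₀) (hβ : 0 < β) (hβ1 : β < 1)
    (hC : 0 < C)
    (hA0 : ∀ t, 0 ≤ A t)
    (hA : ∀ t : ℝ, 0 ≤ t → A t ≤ C * (1 + t ^ β))
    (hE0 : ∀ s, 0 ≤ E s)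
    (hEmono : Antitone E)
    (hE : ∀ γ : ℝ, γ₀ < γ → ∀ M : ℝ, ∃ᶠ s in atTop, M ≤ s ^ γ * E s) :
    ∀ γ : ℝ, β * γ₀ < γ → ∀ M : ℝ, ∃ᶠ t in atTop, M ≤ t ^ γ * E (A t) :=
  stmt12_general A E γ₀ β C hβ hC hA hEmono hE
end
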